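/- arXiv:2111.04488 — 7 statements merged into one kernel-verified Lean document; each statement's English description precedes it below -/
import Mathlib

section
/- Let r, r̄ and r', r̄' be two solutions of the conjugate equations for a pair of 1-morphisms ι : X → Y, ῑ : Y → X in a 2-C*-category. If r* r = r'* r' (equality of the positive 2-morphisms id_X ⇒ id_X) and both pairs induce the same 'left inverse' in the sense that ι(r)* (ι ∘ ῑ)(·) ι(r) = ι(r')* (ι ∘ ῑ)(·) ι(r'), then there exists a unitary 2-morphism u : ῑ ⇒ ῑ such that r' = (u ⊗ 1_ι) r and r̄' = (1_ι ⊗ u) r̄. -/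
/-!
The unitary is `u = ι' (rb*) r₁`. It carries `r` to `r₁` and commutes with `ι' M` because `r₁`
and `rb` intertwine. Pulling the equality of left inverses back along the injective `ι` gives
`u* u = r₁* ι' (rb rb*) r₁ = r* ι' (rb rb*) r`, which is `1` by the second conjugate equation of
`(r, rb)`. The second conjugate equation of `(r₁, rb₁)` makes `ι' (rb₁*) r` a right inverse of
`u`, so it equals `u*` and `u` is unitary; the first conjugate equation of `(r, rb)` then turns
`rb₁* = rb* ι (u*)` into `rb₁ = ι u rb`.
-/

section ConjugateEquations

variable {R N M : Type*} [CommSemiring R] [Semiring N] [StarRing N] [Algebra R N]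
  [Semiring M] [StarRing M] [Algebra R M] (ι : N →⋆ₐ[R] M) (ι' : M →⋆ₐ[R] N)

def conjTransfer (rb : M) (r₁ : N) : N := ι' (star rb) * r₁

variable {ι ι'}

theorem star_mul_map_map_of_intertwines {rb : M} (hrb : ∀ m : M, rb * m = ι (ι' m) * rb)
    (m : M) : star rb * ι (ι' m) = m * star rb := by
  simpa [star_mul, map_star] using (congrArg star (hrb (star m))).symm

theorem commute_conjTransfer {r₁ : N} {rb : M} (hr₁ : ∀ n : N, r₁ * n = ι' (ι n) * r₁)
    (hrb : ∀ m : M, rb * m = ι (ι' m) * rb) (m : M) :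
    Commute (conjTransfer ι' rb r₁) (ι' m) := by
  calc conjTransfer ι' rb r₁ * ι' m = ι' (star rb * ι (ι' m)) * r₁ := by
        rw [conjTransfer, mul_assoc, hr₁, map_mul, mul_assoc]
    _ = ι' m * conjTransfer ι' rb r₁ := by
        rw [star_mul_map_map_of_intertwines hrb, map_mul, mul_assoc, conjTransfer]

theorem conjTransfer_mul {r r₁ : N} {rb : M} (hr₁ : ∀ n : N, r₁ * n = ι' (ι n) * r₁)
    (hconj1 : star rb * ι r = 1) : conjTransfer ι' rb r₁ * r = r₁ := by
  rw [conjTransfer, mul_assoc, hr₁, ← mul_assoc, ← map_mul, hconj1, map_one, one_mul]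

theorem map_star_mul_eq_one {r : N} {rb : M} (hconj2 : star r * ι' rb = 1) :
    ι' (star rb) * r = 1 := by
  simpa [star_mul, map_star] using congrArg star hconj2

theorem conjTransfer_mul_conjTransfer {r r₁ : N} {rb rb₁ : M}
    (hr₁ : ∀ n : N, r₁ * n = ι' (ι n) * r₁) (hrb : ∀ m : M, rb * m = ι (ι' m) * rb)
    (hconj1 : star rb * ι r = 1) (hconj2' : star r₁ * ι' rb₁ = 1) :
    conjTransfer ι' rb r₁ * conjTransfer ι' rb₁ r = 1 := by
  nth_rw 2 [conjTransfer]
  rw [← mul_assoc, (commute_conjTransfer hr₁ hrb _).eq, mul_assoc,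
    conjTransfer_mul hr₁ hconj1, map_star_mul_eq_one hconj2']

theorem star_conjTransfer_mul_self (r₁ : N) (rb : M) :
    star (conjTransfer ι' rb r₁) * conjTransfer ι' rb r₁ = star r₁ * ι' (rb * star rb) * r₁ := by
  simp only [conjTransfer, star_mul, map_star, star_star, map_mul, mul_assoc]

theorem star_mul_map_mul_star_mul_eq_one {r : N} {rb : M} (hconj2 : star r * ι' rb = 1) :
    star r * ι' (rb * star rb) * r = 1 := by
  rw [map_mul, mul_assoc, mul_assoc, map_star_mul_eq_one hconj2, mul_one, hconj2]

theorem map_star_conjTransfer_mul {r : N} {rb rb₁ : M} (hrb : ∀ m : M, rb * m = ι (ι' m) * rb)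
    (hconj1 : star rb * ι r = 1) : ι (star (conjTransfer ι' rb₁ r)) * rb = rb₁ := by
  have h : star rb * ι (conjTransfer ι' rb₁ r) = star rb₁ := by
    rw [conjTransfer, map_mul, ← mul_assoc, star_mul_map_map_of_intertwines hrb, mul_assoc,
      hconj1, mul_one]
  simpa [star_mul, map_star] using congrArg star h

end ConjugateEquations

theorem stmt_4_general {N M : Type*}
    [Ring N] [StarRing N] [Algebra ℂ N]
    [Ring M] [StarRing M] [Algebra ℂ M]
    (ι : N →⋆ₐ[ℂ] M) (ι' : M →⋆ₐ[ℂ] N)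
    (hι : Function.Injective ι)
    (r r₁ : N) (rb rb₁ : M)
    -- intertwining properties: r, r₁ : id_N ⇒ ι'∘ι and rb, rb₁ : id_M ⇒ ι∘ι'
    (hrb : ∀ m : M, rb * m = ι (ι' m) * rb)
    (hr₁ : ∀ n : N, r₁ * n = ι' (ι n) * r₁)
    -- both pairs solve the conjugate equations
    (hconj1 : star rb * ι r = 1) (hconj2 : star r * ι' rb = 1)
    (hconj2' : star r₁ * ι' rb₁ = 1)
    -- both pairs induce the same left inverse
    (hsameE : ∀ m : M, star (ι r) * ι (ι' m) * ι r = star (ι r₁) * ι (ι' m) * ι r₁) :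
    ∃ u : N, (∀ m : M, u * ι' m = ι' m * u) ∧
      star u * u = 1 ∧ u * star u = 1 ∧
      r₁ = u * r ∧ rb₁ = ι u * rb := by
  set u := conjTransfer ι' rb r₁
  have hleftInv (m : M) : star r * ι' m * r = star r₁ * ι' m * r₁ :=
    hι (by simpa only [map_mul, map_star] using hsameE m)
  have hunit : star u * u = 1 := by
    rw [star_conjTransfer_mul_self, ← hleftInv, star_mul_map_mul_star_mul_eq_one hconj2]
  have hright : u * conjTransfer ι' rb₁ r = 1 :=
    conjTransfer_mul_conjTransfer hr₁ hrb hconj1 hconj2'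
  have hstar : star u = conjTransfer ι' rb₁ r := left_inv_eq_right_inv hunit hright
  refine ⟨u, fun m => (commute_conjTransfer hr₁ hrb m).eq, hunit, hstar ▸ hright,
    (conjTransfer_mul hr₁ hconj1).symm, ?_⟩
  rw [← star_star u, hstar, map_star_conjTransfer_mul hrb hconj1]

/-- Uniqueness up to a unitary of solutions of the conjugate equations for `ι : N → M`,
`ι' : M → N` inducing the same left inverse and with the same `r* r`. -/
theorem stmt_4 {N M : Type*}
    [Ring N] [StarRing N] [Algebra ℂ N] [StarModule ℂ N]
    [Ring M] [StarRing M] [Algebra ℂ M] [StarModule ℂ M]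
    (ι : N →⋆ₐ[ℂ] M) (ι' : M →⋆ₐ[ℂ] N)
    (hι : Function.Injective ι) (hι' : Function.Injective ι')
    (r r₁ : N) (rb rb₁ : M)
    -- intertwining properties: r, r₁ : id_N ⇒ ι'∘ι and rb, rb₁ : id_M ⇒ ι∘ι'
    (hr : ∀ n : N, r * n = ι' (ι n) * r)
    (hrb : ∀ m : M, rb * m = ι (ι' m) * rb)
    (hr₁ : ∀ n : N, r₁ * n = ι' (ι n) * r₁)
    (hrb₁ : ∀ m : M, rb₁ * m = ι (ι' m) * rb₁)
    -- both pairs solve the conjugate equations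
    (hconj1 : star rb * ι r = 1) (hconj2 : star r * ι' rb = 1)
    (hconj1' : star rb₁ * ι r₁ = 1) (hconj2' : star r₁ * ι' rb₁ = 1)
    -- equal positive 2-morphisms r* r = r₁* r₁
    (hnorm : star r * r = star r₁ * r₁)
    -- both pairs induce the same left inverse
    (hsameE : ∀ m : M, star (ι r) * ι (ι' m) * ι r = star (ι r₁) * ι (ι' m) * ι r₁) :
    ∃ u : N, (∀ m : M, u * ι' m = ι' m * u) ∧
      star u * u = 1 ∧ u * star u = 1 ∧
      r₁ = u * r ∧ rb₁ = ι u * rb :=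
  stmt_4_general ι ι' hι r r₁ rb rb₁ hrb hr₁ hconj1 hconj2 hconj2' hsameE
end

section
/- Let N ⊆ M be a unital inclusion of von Neumann algebras and E a normal faithful conditional expectation of M onto N with finite index Ind(E) ∈ Z(M). Then the bidual expectation E'' coincides with E if and only if E(Ind(E)) = Ind(E), equivalently Ind(E) ∈ Z(M) ∩ Z(N). -/
/-!
Because `E (Ind E)` is invertible, `E'' = E` says exactly that `E (Ind E * m) = E (Ind E) * E m`
for every `m`. Then `y := Ind E - E (Ind E)` satisfies `E (y * m) = 0` for all `m` by the bimodule
property, and `m = y*` together with faithfulness gives `y = 0`. Conversely, once `Ind E ∈ N` the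
bimodule property pulls `Ind E` out of `E`, and `E(Ind E)⁻¹` cancels it.
-/

theorem eq_zero_of_forall_map_mul_eq_zero {M A : Type*} [Ring M] [StarRing M] [Zero A]
    (E : M → A) (hfaithful : ∀ m : M, E (star m * m) = 0 → m = 0) {y : M}
    (hy : ∀ m : M, E (y * m) = 0) : y = 0 := by
  have : star y = 0 := hfaithful _ (by rw [star_star]; exact hy _)
  simpa using congrArg star this

section ConditionalExpectation

variable {R M : Type*} [CommRing R] [Ring M] [Algebra R M] {N : Subalgebra R M}
  {E : M →ₗ[R] M}

theorem map_mul_of_mem_left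
    (hbimod : ∀ n₁ ∈ N, ∀ n₂ ∈ N, ∀ m : M, E (n₁ * m * n₂) = n₁ * E m * n₂)
    {n : M} (hn : n ∈ N) (m : M) : E (n * m) = n * E m := by
  simpa using hbimod n hn 1 N.one_mem m

theorem map_eq_self_of_map_mul_eq_mul_map [StarRing M] (hrange : ∀ m : M, E m ∈ N)
    (hbimod : ∀ n₁ ∈ N, ∀ n₂ ∈ N, ∀ m : M, E (n₁ * m * n₂) = n₁ * E m * n₂)
    (hfaithful : ∀ m : M, E (star m * m) = 0 → m = 0) {a : M}
    (ha : ∀ m : M, E (a * m) = E a * E m) : E a = a := by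
  have hy : ∀ m : M, E ((a - E a) * m) = 0 := fun m => by
    rw [sub_mul, map_sub, ha, map_mul_of_mem_left hbimod (hrange a), sub_self]
  exact (sub_eq_zero.mp (eq_zero_of_forall_map_mul_eq_zero E hfaithful hy)).symm

end ConditionalExpectation

theorem stmt_5_general {M : Type*} [Ring M] [StarRing M] [Algebra ℂ M]
    (N : Subalgebra ℂ M)
    (E : M →ₗ[ℂ] M)
    (hrange : ∀ m : M, E m ∈ N)
    (hfix : ∀ n ∈ N, E n = n)
    (hbimod : ∀ n₁ ∈ N, ∀ n₂ ∈ N, ∀ m : M, E (n₁ * m * n₂) = n₁ * E m * n₂)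
    (hfaithful : ∀ m : M, E (star m * m) = 0 → m = 0)
    -- the finite index Ind(E): a positive invertible element of Z(M) with Ind(E) ≥ 1
    (Ind : M)
    (cInv : M) (hcInv : E Ind * cInv = 1) (hcInv' : cInv * E Ind = 1)
    -- the bidual expectation
    (E'' : M → M) (hE'' : ∀ m : M, E'' m = cInv * E (Ind * m)) :
    ((∀ m : M, E'' m = E m) ↔ E Ind = Ind) ∧ (E Ind = Ind ↔ Ind ∈ N) := by
  refine ⟨⟨fun h => ?_, fun hInd m => ?_⟩, ⟨fun hInd => hInd ▸ hrange Ind, hfix Ind⟩⟩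
  · refine map_eq_self_of_map_mul_eq_mul_map hrange hbimod hfaithful fun m => ?_
    calc E (Ind * m) = E Ind * (cInv * E (Ind * m)) := by rw [← mul_assoc, hcInv, one_mul]
      _ = E Ind * E m := by rw [← hE'', h]
  · rw [hE'', map_mul_of_mem_left hbimod (hInd ▸ hrange Ind), ← mul_assoc]
    nth_rewrite 1 [← hInd]
    rw [hcInv', one_mul]

/-- The bidual expectation `E'' = E(Ind E)⁻¹ E(Ind E ·)` coincides with `E` if and only if
`E(Ind E) = Ind E`, equivalently `Ind E ∈ Z(M) ∩ Z(N)` (given that `Ind E` is central in `M`,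
this means `Ind E ∈ N`). -/
theorem stmt_5 {M : Type*} [Ring M] [StarRing M] [Algebra ℂ M] [StarModule ℂ M]
    (N : Subalgebra ℂ M)
    (E : M →ₗ[ℂ] M)
    (hrange : ∀ m : M, E m ∈ N)
    (hfix : ∀ n ∈ N, E n = n)
    (hE1 : E 1 = 1)
    (hbimod : ∀ n₁ ∈ N, ∀ n₂ ∈ N, ∀ m : M, E (n₁ * m * n₂) = n₁ * E m * n₂)
    (hfaithful : ∀ m : M, E (star m * m) = 0 → m = 0)
    -- the finite index Ind(E): a positive invertible element of Z(M) with Ind(E) ≥ 1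
    (Ind : M) (hsa : star Ind = Ind)
    (hcentral : ∀ m : M, Ind * m = m * Ind)
    (IndInv : M) (hIndInv : Ind * IndInv = 1) (hIndInv' : IndInv * Ind = 1)
    (cInv : M) (hcInv : E Ind * cInv = 1) (hcInv' : cInv * E Ind = 1)
    -- the bidual expectation
    (E'' : M → M) (hE'' : ∀ m : M, E'' m = cInv * E (Ind * m)) :
    ((∀ m : M, E'' m = E m) ↔ E Ind = Ind) ∧ (E Ind = Ind ↔ Ind ∈ N) :=
  stmt_5_general N E hrange hfix hbimod hfaithful Ind cInv hcInv hcInv' E'' hE''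
end

section
/- Let ι : N → M, ῑ : M → N be unital normal *-homomorphisms of von Neumann algebras, and let r ∈ N with r : id_N ⇒ ῑ∘ι (i.e. r n = ῑ(ι(n)) r for all n ∈ N) and r̄ ∈ M with r̄ : id_M ⇒ ι∘ῑ, solving the conjugate equations r̄* ι(r) = 1 and r* ῑ(r̄) = 1. If r* r is positive invertible in N, then E := ι(r* r)⁻¹ ι(r)* ι(ῑ(·)) ι(r) defines a normal unital completely positive ι(N)-bimodular map from M onto ι(N) which is idempotent, i.e. a conditional expectation of M onto ι(N). -/
/-!
Since `r` intertwines `id_N` with `ῑ ∘ ι` and `s = (r* r)⁻¹` is central, the map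
`φ(m) = s r* ῑ(m) r` is an `N`-bimodular left inverse of `ι`, so `E = ι ∘ φ` is an idempotent
`ι(N)`-bimodular map onto `ι(N)`. Positivity comes from the factorisation
`φ(a* c) = (ῑ(a) r)* s (ῑ(c) r)`: with `s ≥ 0`, the matrix `(E(aᵢ* aⱼ))` is the Gram matrix
`(ι(vᵢ)* ι(s) ι(vⱼ))` of `vᵢ = ῑ(aᵢ) r`.
-/

lemma AddMonoidHom.map_nonneg_of_map_star_mul_self_nonneg {R S : Type*}
    [NonUnitalSemiring R] [PartialOrder R] [StarRing R] [StarOrderedRing R]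
    [AddCommMonoid S] [PartialOrder S] [IsOrderedAddMonoid S]
    (f : R →+ S) (hf : ∀ a, 0 ≤ f (star a * a)) {x : R} (hx : 0 ≤ x) : 0 ≤ f x := by
  rw [StarOrderedRing.nonneg_iff] at hx
  induction hx using AddSubmonoid.closure_induction with
  | mem _ hx => obtain ⟨a, rfl⟩ := hx; exact hf a
  | zero => rw [map_zero]
  | add x y _ _ hx hy => rw [map_add]; exact add_nonneg hx hy

lemma sum_sum_star_mul_mul_nonneg {R κ : Type*}
    [NonUnitalSemiring R] [PartialOrder R] [StarRing R] [StarOrderedRing R] [Fintype κ]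
    {p : R} (hp : 0 ≤ p) (c : κ → R) : 0 ≤ ∑ i, ∑ j, star (c i) * p * c j := by
  have hgram : ∑ i, ∑ j, star (c i) * p * c j = star (∑ i, c i) * p * ∑ j, c j := by
    rw [star_sum, Finset.sum_mul, Finset.sum_mul_sum]
  rw [hgram]
  exact star_left_conjugate_nonneg hp _

section ConjugateLeftInverse

variable {N M G : Type*} [Semiring N] [StarRing N] [Semiring M] [FunLike G M N]

def conjugateLeftInverse [AddMonoidHomClass G M N] (ι' : G) (r s : N) : M →+ N where
  toFun m := s * (star r * ι' m * r)
  map_zero' := by simp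
  map_add' _ _ := by simp only [map_add, mul_add, add_mul]

variable {ι' : G} {r s : N}

lemma conjugateLeftInverse_apply [AddMonoidHomClass G M N] (m : M) :
    conjugateLeftInverse ι' r s m = s * (star r * ι' m * r) :=
  rfl

lemma conjugateLeftInverse_map [AddMonoidHomClass G M N] {ι : N → M}
    (hr : ∀ n, r * n = ι' (ι n) * r) (hs : s * (star r * r) = 1) (n : N) :
    conjugateLeftInverse ι' r s (ι n) = n := by
  rw [conjugateLeftInverse_apply, mul_assoc (star r), ← hr, ← mul_assoc (star r), ← mul_assoc, hs,
    one_mul]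

variable [StarRing M] [RingHomClass G M N] [StarHomClass G M N]

lemma conjugateLeftInverse_map_mul_mul {F : Type*} [FunLike F N M] [StarHomClass F N M] {ι : F}
    (hr : ∀ n, r * n = ι' (ι n) * r)
    (hs : ∀ n, Commute s n) (a b : N) (m : M) :
    conjugateLeftInverse ι' r s (ι a * m * ι b) = a * conjugateLeftInverse ι' r s m * b := by
  have hr' : ∀ n, star r * ι' (ι n) = n * star r := fun n => by
    simpa only [star_mul, map_star, star_star] using (congrArg star (hr (star n))).symm
  simp only [conjugateLeftInverse_apply, map_mul]
  calc s * (star r * (ι' (ι a) * ι' m * ι' (ι b)) * r)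
      = s * (star r * ι' (ι a) * ι' m * (ι' (ι b) * r)) := by simp only [mul_assoc]
    _ = s * (a * (star r * ι' m * r)) * b := by rw [hr', ← hr]; simp only [mul_assoc]
    _ = a * (s * (star r * ι' m * r)) * b := by rw [(hs a).left_comm]

lemma conjugateLeftInverse_star_mul (hs : ∀ n, Commute s n) (a c : M) :
    conjugateLeftInverse ι' r s (star a * c) = star (ι' a * r) * s * (ι' c * r) := by
  simp only [conjugateLeftInverse_apply, map_mul, map_star, star_mul, mul_assoc]
  rw [(hs _).left_comm, (hs _).left_comm]

variable [PartialOrder N] [StarOrderedRing N] [PartialOrder M] [StarOrderedRing M]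

lemma conjugateLeftInverse_nonneg (hs₀ : 0 ≤ s) (hs : ∀ n, Commute s n) {m : M} (hm : 0 ≤ m) :
    0 ≤ conjugateLeftInverse ι' r s m := by
  refine (conjugateLeftInverse ι' r s).map_nonneg_of_map_star_mul_self_nonneg (fun a => ?_) hm
  rw [conjugateLeftInverse_star_mul hs]
  exact star_left_conjugate_nonneg hs₀ _

lemma map_conjugateLeftInverse_completelyPositive {F : Type*} [FunLike F N M]
    [RingHomClass F N M] [NonUnitalStarRingHomClass F N M] (ι : F)
    (hs₀ : 0 ≤ s) (hs : ∀ n, Commute s n) {κ : Type*} [Fintype κ] (a b : κ → M) :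
    0 ≤ ∑ i, ∑ j, star (b i) * ι (conjugateLeftInverse ι' r s (star (a i) * a j)) * b j := by
  have hgram : ∀ i j, star (b i) * ι (conjugateLeftInverse ι' r s (star (a i) * a j)) * b j
      = star (ι (ι' (a i) * r) * b i) * ι s * (ι (ι' (a j) * r) * b j) := fun i j => by
    simp only [conjugateLeftInverse_star_mul hs, map_mul, map_star, star_mul, mul_assoc]
  simp only [hgram]
  exact sum_sum_star_mul_mul_nonneg (map_nonneg ι hs₀) _

end ConjugateLeftInverse

theorem stmt_9_general {N M : Type*}
    [Ring N] [StarRing N] [Algebra ℂ N]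
    [PartialOrder N] [StarOrderedRing N]
    [Ring M] [StarRing M] [Algebra ℂ M]
    [PartialOrder M] [StarOrderedRing M]
    (ι : N →⋆ₐ[ℂ] M) (ι' : M →⋆ₐ[ℂ] N)
    (r : N)
    -- intertwining properties
    (hr : ∀ n : N, r * n = ι' (ι n) * r)
    (s : N) (hspos : 0 ≤ s)
    (hs1 : s * (star r * r) = 1)
    (hscentral : ∀ n : N, s * n = n * s)
    (E : M → M) (hE : ∀ m : M, E m = ι s * (star (ι r) * ι (ι' m) * ι r)) :
    E 1 = 1
    ∧ (∀ m : M, E m ∈ Set.range ι)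
    ∧ (∀ n : N, E (ι n) = ι n)
    ∧ (∀ n₁ n₂ : N, ∀ m : M, E (ι n₁ * m * ι n₂) = ι n₁ * E m * ι n₂)
    ∧ (∀ m : M, E (E m) = E m)
    ∧ (∀ m : M, 0 ≤ m → 0 ≤ E m)
    ∧ (∀ (k : ℕ) (a b : Fin k → M),
        0 ≤ ∑ i, ∑ j, star (b i) * E (star (a i) * a j) * b j) := by
  set φ := conjugateLeftInverse ι' r s
  have hEφ : ∀ m, E m = ι (φ m) := fun m => by
    rw [hE, conjugateLeftInverse_apply, map_mul, map_mul, map_mul, map_star]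
  have hφι : ∀ n, φ (ι n) = n := conjugateLeftInverse_map hr hs1
  refine ⟨?_, fun m => ⟨φ m, (hEφ m).symm⟩, fun n => ?_, fun a b m => ?_, fun m => ?_,
    fun m hm => ?_, fun k a b => ?_⟩
  · rw [hEφ, ← map_one ι, hφι]
  · rw [hEφ, hφι]
  · rw [hEφ, hEφ, conjugateLeftInverse_map_mul_mul hr hscentral, map_mul, map_mul]
  · rw [hEφ, hEφ, hφι]
  · rw [hEφ]
    exact map_nonneg ι (conjugateLeftInverse_nonneg hspos hscentral hm)
  · simp only [hEφ]
    exact map_conjugateLeftInverse_completelyPositive ι hspos hscentral a b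

/-- A solution `r, r̄` of the conjugate equations for `ι : N → M`, `ι' : M → N`, with `r* r`
invertible in `Z(N)`, defines the conditional expectation
`E = ι(r* r)⁻¹ ι(r)* ι(ι'(·)) ι(r)` of `M` onto `ι(N)`: it is unital, takes values in
`ι(N)`, fixes `ι(N)`, is `ι(N)`-bimodular, idempotent and completely positive. -/
theorem stmt_9 {N M : Type*}
    [Ring N] [StarRing N] [Algebra ℂ N] [StarModule ℂ N]
    [PartialOrder N] [StarOrderedRing N]
    [Ring M] [StarRing M] [Algebra ℂ M] [StarModule ℂ M]
    [PartialOrder M] [StarOrderedRing M]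
    (ι : N →⋆ₐ[ℂ] M) (ι' : M →⋆ₐ[ℂ] N)
    (hι : Function.Injective ι) (hι' : Function.Injective ι')
    (r : N) (rb : M)
    -- intertwining properties
    (hr : ∀ n : N, r * n = ι' (ι n) * r)
    (hrb : ∀ m : M, rb * m = ι (ι' m) * rb)
    -- conjugate equations
    (hconj1 : star rb * ι r = 1) (hconj2 : star r * ι' rb = 1)
    -- r* r is positive invertible in Z(N), with inverse s
    (hrrpos : 0 ≤ star r * r)
    (s : N) (hs_sa : star s = s) (hspos : 0 ≤ s)
    (hs1 : s * (star r * r) = 1) (hs2 : (star r * r) * s = 1)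
    (hscentral : ∀ n : N, s * n = n * s)
    (hrrcentral : ∀ n : N, (star r * r) * n = n * (star r * r))
    (E : M → M) (hE : ∀ m : M, E m = ι s * (star (ι r) * ι (ι' m) * ι r)) :
    E 1 = 1
    ∧ (∀ m : M, E m ∈ Set.range ι)
    ∧ (∀ n : N, E (ι n) = ι n)
    ∧ (∀ n₁ n₂ : N, ∀ m : M, E (ι n₁ * m * ι n₂) = ι n₁ * E m * ι n₂)
    ∧ (∀ m : M, E (E m) = E m)
    ∧ (∀ m : M, 0 ≤ m → 0 ≤ E m)
    ∧ (∀ (k : ℕ) (a b : Fin k → M),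
        0 ≤ ∑ i, ∑ j, star (b i) * E (star (a i) * a j) * b j) :=
  stmt_9_general ι ι' r hr s hspos hs1 hscentral E hE
end

section
/- In the setting of a solution r, r̄ of the conjugate equations for ι : N → M and ῑ : M → N, the element e := ι(r) ι(r* r)⁻¹ ι(r)* implements the expectation E = ι(r* r)⁻¹ ι(r)* ιῑ(·) ι(r) in the sense that, after applying the isomorphism identifying the relevant algebras, ι(w w*) ιῑ(m) ι(w w*) = ιῑ(E(m)) ι(w w*) for all m ∈ M, where w := r (r* r)^{-1/2}. -/
/-! With `s = (r* r)⁻¹`, the projection `w w*` is `r s r*`, so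
`w w* ῑ(m) w w* = r (s r* ῑ(m) r) s r*`; the intertwining relation `r n = ῑι(n) r` moves the
middle factor `s r* ῑ(m) r = ῑ(E m)` past `r`. -/

theorem mul_mul_mul_eq_map_mul_of_intertwines {N : Type*} [Semigroup N] (φ : N → N) {r : N}
    (hr : ∀ n, r * n = φ n * r) (c x : N) :
    r * c * x * (r * c) = φ (c * x * r) * (r * c) := by
  calc r * c * x * (r * c) = r * (c * x * r) * c := by simp only [mul_assoc]
    _ = φ (c * x * r) * (r * c) := by rw [hr, mul_assoc]

theorem mul_intertwines_of_commute {N : Type*} [Semigroup N] (φ : N → N) {r t : N}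
    (hr : ∀ n, r * n = φ n * r) (ht : ∀ n, t * n = n * t) (n : N) :
    r * t * n = φ n * (r * t) := by
  rw [mul_assoc, ht, ← mul_assoc, hr, mul_assoc]

namespace IsSelfAdjoint

variable {R : Type*} [Semigroup R] [StarMul R] {t : R}

theorem star_mul_self_mul_right (ht : IsSelfAdjoint t) (r : R) :
    star (r * t) * (r * t) = t * (star r * r) * t := by
  rw [star_mul, ht.star_eq]
  simp only [mul_assoc]

theorem mul_star_self_mul_right (ht : IsSelfAdjoint t) (r : R) :
    r * t * star (r * t) = r * (t * t) * star r := by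
  rw [star_mul, ht.star_eq]
  simp only [mul_assoc]

end IsSelfAdjoint

theorem stmt_10_general {N M : Type*}
    [Ring N] [StarRing N] [Algebra ℂ N] [StarModule ℂ N]
    [Ring M] [StarRing M] [Algebra ℂ M] [StarModule ℂ M]
    (ι : N →⋆ₐ[ℂ] M) (ι' : M →⋆ₐ[ℂ] N)
    (r : N)
    (hr : ∀ n : N, r * n = ι' (ι n) * r)
    -- s = (r* r)⁻¹, central in N
    (s : N)
    -- t = (r* r)^{-1/2} : central self-adjoint square root of s
    (t : N) (ht_sa : star t = t) (htcentral : ∀ n : N, t * n = n * t)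
    (hts : t * t = s) (ht : t * (star r * r) * t = 1)
    (w : N) (hw : w = r * t)
    (E : M → M) (hE : ∀ m : M, E m = ι s * (star (ι r) * ι (ι' m) * ι r)) :
    star w * w = 1
    ∧ (∀ n : N, w * n = ι' (ι n) * w)
    ∧ ι r * ι s * star (ι r) = ι (w * star w)
    ∧ (∀ m : M,
        ι (w * star w) * ι (ι' m) * ι (w * star w) = ι (ι' (E m)) * ι (w * star w)) := by
  subst hw
  have hproj : r * t * star (r * t) = r * (s * star r) := by
    rw [IsSelfAdjoint.mul_star_self_mul_right ht_sa, hts, mul_assoc]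
  refine ⟨(IsSelfAdjoint.star_mul_self_mul_right ht_sa r).trans ht,
    mul_intertwines_of_commute _ hr htcentral, ?_, fun m => ?_⟩
  · rw [hproj, ← mul_assoc, map_mul, map_mul, map_star]
  · rw [← map_mul, ← map_mul, ← map_mul, hproj, mul_mul_mul_eq_map_mul_of_intertwines _ hr, hE,
      ← map_star, ← map_mul, ← map_mul, ← map_mul]
    simp only [mul_assoc]

/-- The element `e = ι(r) ι(r* r)⁻¹ ι(r)*` equals `ι(w w*)` for the normalized isometry
`w = r (r* r)^{-1/2}`, and it implements the expectation
`E = ι(r* r)⁻¹ ι(r)* ιι'(·) ι(r)` in the sense that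
`ι(w w*) ιι'(m) ι(w w*) = ιι'(E m) ι(w w*)` for all `m ∈ M`. -/
theorem stmt_10 {N M : Type*}
    [Ring N] [StarRing N] [Algebra ℂ N] [StarModule ℂ N]
    [Ring M] [StarRing M] [Algebra ℂ M] [StarModule ℂ M]
    (ι : N →⋆ₐ[ℂ] M) (ι' : M →⋆ₐ[ℂ] N)
    (hι : Function.Injective ι) (hι' : Function.Injective ι')
    (r : N) (rb : M)
    (hr : ∀ n : N, r * n = ι' (ι n) * r)
    (hrb : ∀ m : M, rb * m = ι (ι' m) * rb)
    (hconj1 : star rb * ι r = 1) (hconj2 : star r * ι' rb = 1)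
    -- s = (r* r)⁻¹, central in N
    (s : N) (hs_sa : star s = s)
    (hs1 : s * (star r * r) = 1) (hs2 : (star r * r) * s = 1)
    (hscentral : ∀ n : N, s * n = n * s)
    -- t = (r* r)^{-1/2} : central self-adjoint square root of s
    (t : N) (ht_sa : star t = t) (htcentral : ∀ n : N, t * n = n * t)
    (hts : t * t = s) (ht : t * (star r * r) * t = 1)
    (w : N) (hw : w = r * t)
    (E : M → M) (hE : ∀ m : M, E m = ι s * (star (ι r) * ι (ι' m) * ι r)) :
    star w * w = 1
    ∧ (∀ n : N, w * n = ι' (ι n) * w)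
    ∧ ι r * ι s * star (ι r) = ι (w * star w)
    ∧ (∀ m : M,
        ι (w * star w) * ι (ι' m) * ι (w * star w) = ι (ι' (E m)) * ι (w * star w)) :=
  stmt_10_general ι ι' r hr s t ht_sa htcentral hts ht w hw E hE
end

section
/- If r, r̄ solve the conjugate equations for ι, ῑ and determine the minimal expectation E⁰ (which has scalar index Ind(E⁰) = [M:N]₀ · 1), and if r* r = √([M:N]₀) · 1, then ‖r* r‖ · ‖r̄* r̄‖ = [M:N]₀, i.e. the solution attains the minimal value of the product of the norms of the loop parameters. -/
theorem norm_mul_norm_mul_eq_of_eq_smul_one {𝕜 A B F : Type*} [NormedField 𝕜]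
    [NormedRing A] [NormedAlgebra 𝕜 A] [NormOneClass A]
    [NormedRing B] [NormedAlgebra 𝕜 B] [NormOneClass B]
    [FunLike F A B] [AlgHomClass F 𝕜 A B] (φ : F) {a : A} {x y : B} {c e : 𝕜}
    (ha : a = c • 1) (h : x * φ a * y = e • 1) :
    ‖a‖ * ‖x * y‖ = ‖e‖ :=
  calc ‖a‖ * ‖x * y‖ = ‖c • (x * y)‖ := by
        rw [norm_smul, ha, norm_smul, norm_one, mul_one]
    _ = ‖x * φ a * y‖ := by
      rw [ha, map_smul, map_one, mul_smul_comm, mul_one, smul_mul_assoc]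
    _ = ‖e‖ := by rw [h, norm_smul, norm_one, mul_one]

theorem stmt_12_general {N M : Type*}
    [NormedRing N] [StarRing N] [NormedAlgebra ℂ N]
    [NormOneClass N]
    [NormedRing M] [StarRing M] [NormedAlgebra ℂ M]
    [NormOneClass M]
    (ι : N →⋆ₐ[ℂ] M)
    (r : N) (rb : M)
    -- [M:N]₀ = d, the (scalar) minimal index, attained: Ind(E⁰) = d • 1
    (d : ℝ) (hd : 1 ≤ d)
    (hind : star rb * ι (star r * r) * rb = (d : ℂ) • (1 : M))
    (hrr : star r * r = ((Real.sqrt d : ℂ)) • (1 : N)) :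
    ‖star r * r‖ * ‖star rb * rb‖ = d := by
  have key := norm_mul_norm_mul_eq_of_eq_smul_one ι hrr hind
  rwa [Complex.norm_real, Real.norm_of_nonneg (by linarith)] at key

/-- If `r, r̄` solve the conjugate equations for `ι, ι'` and determine the minimal
expectation (scalar index `Ind(E⁰) = r̄* ι(r* r) r̄ = [M:N]₀ • 1`), and if
`r* r = √[M:N]₀ • 1`, then `‖r* r‖ ⬝ ‖r̄* r̄‖ = [M:N]₀`, i.e. the solution attains the
minimal value of the product of the norms of the loop parameters. -/
theorem stmt_12 {N M : Type*}
    [NormedRing N] [StarRing N] [CStarRing N] [NormedAlgebra ℂ N] [StarModule ℂ N]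
    [NormOneClass N] [CompleteSpace N]
    [NormedRing M] [StarRing M] [CStarRing M] [NormedAlgebra ℂ M] [StarModule ℂ M]
    [NormOneClass M] [CompleteSpace M]
    (ι : N →⋆ₐ[ℂ] M) (ι' : M →⋆ₐ[ℂ] N)
    (hι : Function.Injective ι) (hι' : Function.Injective ι')
    (r : N) (rb : M)
    (hr : ∀ n : N, r * n = ι' (ι n) * r)
    (hrb : ∀ m : M, rb * m = ι (ι' m) * rb)
    (hconj1 : star rb * ι r = 1) (hconj2 : star r * ι' rb = 1)
    -- [M:N]₀ = d, the (scalar) minimal index, attained: Ind(E⁰) = d • 1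
    (d : ℝ) (hd : 1 ≤ d)
    (hind : star rb * ι (star r * r) * rb = (d : ℂ) • (1 : M))
    (hrr : star r * r = ((Real.sqrt d : ℂ)) • (1 : N)) :
    ‖star r * r‖ * ‖star rb * rb‖ = d :=
  stmt_12_general ι r rb d hd hind hrr
end

section
/- Let (θ, x, w) be a Q-system in End(N): x² = x θ(x), x w = 1 = x θ(w), x θ(x)* = x* x = θ(x) x*, with x θ²(n) = θ(n) x and w n = θ(n) w for all n ∈ N, and w* w positive invertible in Z(N). Then x* = x θ(x* w), and consequently the algebra generated by θ(N) and x equals x θ(N) = θ(N) x*. -/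
/-!
Starring the intertwining relation `x θ²(n) = θ(n) x` and inserting `1 = x θ(w)` into `x*`
together with the Frobenius relation `x* x = x θ(x)*` gives `x* = x θ(x* w)`.
The multiplication rule `x θ(p) x θ(q) = x θ(x θ(p) q)`, from `x² = x θ(x)` and the intertwining
relation, shows that `x θ(N)` is a subalgebra containing `θ(N)` and `x`, hence equals the algebra
they generate; writing `x* = x θ(y)` and its adjoint `x = θ(y*) x*` converts `x θ(N)` into
`θ(N) x*` and back.
-/

namespace StarAlgHom

variable {R A : Type*} [CommSemiring R] [Semiring A] [StarRing A] [Algebra R A]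
  (θ : A →⋆ₐ[R] A) {x : A}

theorem star_eq_mul_map_star_mul {w : A} (hunit : x * θ w = 1)
    (hfrob : x * star (θ x) = star x * x) : star x = x * θ (star x * w) :=
  calc star x = star x * x * θ w := by rw [mul_assoc, hunit, mul_one]
    _ = x * θ (star x * w) := by rw [← hfrob, map_mul, map_star, mul_assoc]

theorem star_mul_map_of_mul_map_map (hint : ∀ n, x * θ (θ n) = θ n * x) (n : A) :
    star x * θ n = θ (θ n) * star x := by
  simpa only [star_mul, map_star, star_star] using congrArg star (hint (star n)).symm

theorem mul_map_mul_mul_map (hmul : x * x = x * θ x) (hint : ∀ n, x * θ (θ n) = θ n * x)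
    (p q : A) : x * θ p * (x * θ q) = x * θ (x * θ p * q) :=
  calc x * θ p * (x * θ q) = x * (θ p * x) * θ q := by simp only [mul_assoc]
    _ = x * x * θ (θ p) * θ q := by rw [← hint, mul_assoc x x]
    _ = x * θ (x * θ p * q) := by rw [hmul]; simp only [map_mul, mul_assoc]

theorem coe_adjoin_range_union_singleton {w : A} (hmul : x * x = x * θ x) (hunit : x * θ w = 1)
    (hint : ∀ n, x * θ (θ n) = θ n * x) :
    ((Algebra.adjoin R (Set.range (θ : A → A) ∪ {x}) : Subalgebra R A) : Set A)
      = {z : A | ∃ n : A, z = x * θ n} := by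
  refine Set.Subset.antisymm (fun z hz => ?_) ?_
  · induction hz using Algebra.adjoin_induction with
    | mem z hz =>
      rcases hz with ⟨n, rfl⟩ | rfl
      · exact ⟨w * n, by rw [map_mul, ← mul_assoc, hunit, one_mul]⟩
      · exact ⟨1, by rw [map_one, mul_one]⟩
    | algebraMap c =>
      exact ⟨c • w, by rw [map_smul, mul_smul_comm, hunit, Algebra.algebraMap_eq_smul_one]⟩
    | add a b _ _ ha hb =>
      obtain ⟨⟨p, rfl⟩, ⟨q, rfl⟩⟩ := And.intro ha hb
      exact ⟨p + q, by rw [map_add, mul_add]⟩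
    | mul a b _ _ ha hb =>
      obtain ⟨⟨p, rfl⟩, ⟨q, rfl⟩⟩ := And.intro ha hb
      exact ⟨x * θ p * q, mul_map_mul_mul_map θ hmul hint p q⟩
  · rintro z ⟨n, rfl⟩
    exact mul_mem (Algebra.subset_adjoin (Or.inr rfl)) (Algebra.subset_adjoin (Or.inl ⟨n, rfl⟩))

theorem setOf_mul_map_eq_setOf_map_mul_star {y : A} (hy : star x = x * θ y)
    (hint : ∀ n, x * θ (θ n) = θ n * x) :
    {z : A | ∃ n : A, z = x * θ n} = {z : A | ∃ n : A, z = θ n * star x} := by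
  have hx : x = θ (star y) * star x := by
    simpa only [star_mul, star_star, map_star] using congrArg star hy
  ext z
  constructor
  · rintro ⟨n, rfl⟩
    refine ⟨star y * θ n, ?_⟩
    calc x * θ n = θ (star y) * (star x * θ n) := by rw [← mul_assoc, ← hx]
      _ = θ (star y * θ n) * star x := by
        rw [star_mul_map_of_mul_map_map θ hint, map_mul, mul_assoc]
  · rintro ⟨n, rfl⟩
    refine ⟨θ n * y, ?_⟩
    rw [hy, ← mul_assoc, ← hint, mul_assoc, map_mul]

end StarAlgHom

theorem stmt_13_general {N : Type*} [Ring N] [StarRing N] [Algebra ℂ N]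
    (θ : N →⋆ₐ[ℂ] N) (x w : N)
    -- Frobenius algebra relations
    (hmul : x * x = x * θ x)
    (hunit2 : x * θ w = 1)
    (hfrob1 : x * star (θ x) = star x * x)
    -- intertwining relations
    (hint_x : ∀ n : N, x * θ (θ n) = θ n * x) :
    star x = x * θ (star x * w)
    ∧ ((Algebra.adjoin ℂ (Set.range (θ : N → N) ∪ {x}) : Subalgebra ℂ N) : Set N)
        = {z : N | ∃ n : N, z = x * θ n}
    ∧ {z : N | ∃ n : N, z = x * θ n} = {z : N | ∃ n : N, z = θ n * star x} := by
  have hstar := θ.star_eq_mul_map_star_mul hunit2 hfrob1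
  exact ⟨hstar, θ.coe_adjoin_range_union_singleton hmul hunit2 hint_x,
    θ.setOf_mul_map_eq_setOf_map_mul_star hstar hint_x⟩

/-- For a Q-system `(θ, x, w)` in `End(N)` one has `x* = x θ(x* w)`, and consequently the
algebra generated by `θ(N)` and `x` equals `x θ(N) = θ(N) x*`. -/
theorem stmt_13 {N : Type*} [Ring N] [StarRing N] [Algebra ℂ N] [StarModule ℂ N]
    (θ : N →⋆ₐ[ℂ] N) (x w : N)
    -- Frobenius algebra relations
    (hmul : x * x = x * θ x)
    (hunit1 : x * w = 1) (hunit2 : x * θ w = 1)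
    (hfrob1 : x * star (θ x) = star x * x) (hfrob2 : star x * x = θ x * star x)
    -- intertwining relations
    (hint_x : ∀ n : N, x * θ (θ n) = θ n * x)
    (hint_w : ∀ n : N, w * n = θ n * w)
    -- w* w positive invertible in Z(N)
    (u : N) (hu1 : u * (star w * w) = 1) (hu2 : (star w * w) * u = 1)
    (hww_central : ∀ n : N, (star w * w) * n = n * (star w * w)) :
    star x = x * θ (star x * w)
    ∧ ((Algebra.adjoin ℂ (Set.range (θ : N → N) ∪ {x}) : Subalgebra ℂ N) : Set N)
        = {z : N | ∃ n : N, z = x * θ n}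
    ∧ {z : N | ∃ n : N, z = x * θ n} = {z : N | ∃ n : N, z = θ n * star x} :=
  stmt_13_general θ x w hmul hunit2 hfrob1 hint_x
end

section
/- Let ι : N → M be an inclusion of properly infinite von Neumann algebras with conjugate morphism ῑ := ι⁻¹ ∘ γ, where γ is a canonical endomorphism, and let r, r̄ solve the conjugate equations for ι, ῑ corresponding to a finite index expectation E. Then the triple (θ, x, w) with θ := ῑ ∘ ι, x := ῑ(r̄)*, w := r is a Q-system in End(N): it satisfies the unitary Frobenius algebra relations x² = x θ(x), x w = 1 = x θ(w), x θ(x)* = x* x = θ(x) x*, and w* w = r* r is positive invertible in Z(N). -/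
/-!
The intertwining property of `r̄` gives, after taking adjoints, `r̄* ιῑ(m) = m r̄*`. Applying `ῑ`
to this identity turns every Q-system relation for `x = ῑ(r̄*)` into a relation in `M` that is
either this one or the intertwining property itself, while the unit laws are the two conjugate
equations. The element `r* r` is central because `r` intertwines `id` with `θ`, and it is
invertible since `x r = 1` gives `1 = r* x* x r ≤ ‖x* x‖ r* r`.
-/

theorem star_mul_map_of_mul_eq_map_mul {A F : Type*} [Semiring A] [StarRing A] [FunLike F A A]
    [StarHomClass F A A] {φ : F} {t : A} (ht : ∀ a, t * a = φ a * t) (a : A) :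
    star t * φ a = a * star t := by
  simpa only [star_mul, star_star, map_star] using (congrArg star (ht (star a))).symm

theorem isUnit_star_mul_self_of_mul_eq_one {A : Type*} [CStarAlgebra A] [PartialOrder A]
    [StarOrderedRing A] {x r : A} (h : x * r = 1) : IsUnit (star r * r) := by
  have hle : (1 : A) ≤ algebraMap ℝ A ‖star x * x‖ * (star r * r) :=
    calc (1 : A) = star (x * r) * (x * r) := by rw [h, star_one, one_mul]
      _ = star r * (star x * x) * r := by simp only [star_mul, mul_assoc]
      _ ≤ star r * algebraMap ℝ A ‖star x * x‖ * r :=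
        star_left_conjugate_le_conjugate IsSelfAdjoint.le_algebraMap_norm_self r
      _ = algebraMap ℝ A ‖star x * x‖ * (star r * r) := by
        rw [(Algebra.commute_algebraMap_right _ _).eq, mul_assoc]
  exact ((Algebra.commute_algebraMap_left _ _).isUnit_mul_iff.mp
    (CStarAlgebra.isUnit_of_le 1 hle)).2

section ConjugateEquations

variable {R N M : Type*} [CommSemiring R] [Semiring N] [StarRing N] [Algebra R N]
  [Semiring M] [StarRing M] [Algebra R M]

structure ConjugateEquations (ι : N →⋆ₐ[R] M) (ι' : M →⋆ₐ[R] N) (r : N) (rb : M) : Prop where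
  r_mul : ∀ n, r * n = ι' (ι n) * r
  rb_mul : ∀ m, rb * m = ι (ι' m) * rb
  star_rb_mul_map_r : star rb * ι r = 1
  star_r_mul_map_rb : star r * ι' rb = 1

namespace ConjugateEquations

variable {ι : N →⋆ₐ[R] M} {ι' : M →⋆ₐ[R] N} {r : N} {rb : M}
  (h : ConjugateEquations ι ι' r rb)
include h

theorem star_rb_mul (m : M) : star rb * ι (ι' m) = m * star rb :=
  star_mul_map_of_mul_eq_map_mul (φ := ι.comp ι') h.rb_mul m

theorem star_r_mul (n : N) : star r * ι' (ι n) = n * star r :=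
  star_mul_map_of_mul_eq_map_mul (φ := ι'.comp ι) h.r_mul n

theorem star_r_mul_r_comm (n : N) : star r * r * n = n * (star r * r) := by
  rw [mul_assoc, h.r_mul, ← mul_assoc, h.star_r_mul, mul_assoc]

theorem unit_left : ι' (star rb) * r = 1 := by
  simpa only [star_mul, star_star, map_star, star_one] using congrArg star h.star_r_mul_map_rb

theorem unit_right : ι' (star rb) * (ι'.comp ι) r = 1 := by
  rw [StarAlgHom.comp_apply, ← map_mul, h.star_rb_mul_map_r, map_one]

theorem assoc :
    ι' (star rb) * ι' (star rb) = ι' (star rb) * (ι'.comp ι) (ι' (star rb)) := by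
  rw [StarAlgHom.comp_apply, ← map_mul, ← map_mul, h.star_rb_mul]

theorem frobenius_left :
    ι' (star rb) * star ((ι'.comp ι) (ι' (star rb))) = star (ι' (star rb)) * ι' (star rb) := by
  simp only [StarAlgHom.comp_apply, ← map_star, star_star, ← map_mul, h.star_rb_mul]

theorem frobenius_right :
    star (ι' (star rb)) * ι' (star rb) = (ι'.comp ι) (ι' (star rb)) * star (ι' (star rb)) := by
  simp only [StarAlgHom.comp_apply, ← map_star, star_star, ← map_mul, h.rb_mul]

theorem mul_intertwines (n : N) :
    ι' (star rb) * (ι'.comp ι) ((ι'.comp ι) n) = (ι'.comp ι) n * ι' (star rb) := by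
  simp only [StarAlgHom.comp_apply, ← map_mul, h.star_rb_mul]

end ConjugateEquations

end ConjugateEquations

theorem stmt_16_general {N M : Type*}
    [NormedRing N] [StarRing N] [CStarRing N] [NormedAlgebra ℂ N] [StarModule ℂ N]
    [CompleteSpace N] [PartialOrder N] [StarOrderedRing N]
    [NormedRing M] [StarRing M] [NormedAlgebra ℂ M]
    (ι : N →⋆ₐ[ℂ] M) (ι' : M →⋆ₐ[ℂ] N)
    (r : N) (rb : M)
    (hr : ∀ n : N, r * n = ι' (ι n) * r)
    (hrb : ∀ m : M, rb * m = ι (ι' m) * rb)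
    (hconj1 : star rb * ι r = 1) (hconj2 : star r * ι' rb = 1)
    (θ : N →⋆ₐ[ℂ] N) (hθ : ∀ n : N, θ n = ι' (ι n))
    (x w : N) (hx : x = ι' (star rb)) (hw : w = r) :
    -- unitary Frobenius algebra relations
    x * x = x * θ x
    ∧ x * w = 1 ∧ x * θ w = 1
    ∧ x * star (θ x) = star x * x ∧ star x * x = θ x * star x
    -- intertwining relations
    ∧ (∀ n : N, x * θ (θ n) = θ n * x)
    ∧ (∀ n : N, w * n = θ n * w)
    -- w* w = r* r is positive invertible in Z(N)
    ∧ star w * w = star r * r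
    ∧ 0 ≤ star r * r
    ∧ IsUnit (star r * r)
    ∧ (∀ n : N, (star r * r) * n = n * (star r * r)) := by
  let _ : CStarAlgebra N :=
    { ‹NormedRing N›, ‹StarRing N›, ‹CStarRing N›, ‹NormedAlgebra ℂ N›,
      ‹StarModule ℂ N›, ‹CompleteSpace N› with }
  have h : ConjugateEquations ι ι' r rb := ⟨hr, hrb, hconj1, hconj2⟩
  obtain rfl : θ = ι'.comp ι := StarAlgHom.ext hθ
  subst hx hw
  exact ⟨h.assoc, h.unit_left, h.unit_right, h.frobenius_left, h.frobenius_right,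
    h.mul_intertwines, h.r_mul, rfl, star_mul_self_nonneg w,
    isUnit_star_mul_self_of_mul_eq_one h.unit_left, h.star_r_mul_r_comm⟩

/-- From a solution `r, r̄` of the conjugate equations for `ι : N → M` and its conjugate
`ι' : M → N` (corresponding to a finite index expectation `E`), the triple
`(θ, x, w) = (ι'∘ι, ι'(r̄)*, r)` is a Q-system in `End(N)`: it satisfies the unitary
Frobenius algebra relations and the intertwining relations, and `w* w = r* r` is positive
invertible in `Z(N)`. -/
theorem stmt_16 {N M : Type*}
    [NormedRing N] [StarRing N] [CStarRing N] [NormedAlgebra ℂ N] [StarModule ℂ N]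
    [CompleteSpace N] [PartialOrder N] [StarOrderedRing N]
    [NormedRing M] [StarRing M] [CStarRing M] [NormedAlgebra ℂ M] [StarModule ℂ M]
    [CompleteSpace M]
    (ι : N →⋆ₐ[ℂ] M) (ι' : M →⋆ₐ[ℂ] N)
    (hι : Function.Injective ι) (hι' : Function.Injective ι')
    (r : N) (rb : M)
    (hr : ∀ n : N, r * n = ι' (ι n) * r)
    (hrb : ∀ m : M, rb * m = ι (ι' m) * rb)
    (hconj1 : star rb * ι r = 1) (hconj2 : star r * ι' rb = 1)
    (θ : N →⋆ₐ[ℂ] N) (hθ : ∀ n : N, θ n = ι' (ι n))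
    (x w : N) (hx : x = ι' (star rb)) (hw : w = r) :
    -- unitary Frobenius algebra relations
    x * x = x * θ x
    ∧ x * w = 1 ∧ x * θ w = 1
    ∧ x * star (θ x) = star x * x ∧ star x * x = θ x * star x
    -- intertwining relations
    ∧ (∀ n : N, x * θ (θ n) = θ n * x)
    ∧ (∀ n : N, w * n = θ n * w)
    -- w* w = r* r is positive invertible in Z(N)
    ∧ star w * w = star r * r
    ∧ 0 ≤ star r * r
    ∧ IsUnit (star r * r)
    ∧ (∀ n : N, (star r * r) * n = n * (star r * r)) :=
  stmt_16_general ι ι' r rb hr hrb hconj1 hconj2 θ hθ x w hx hw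
end
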